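/- Let f, g : (0,∞) → [0,∞) and suppose D(r) ≤ c[(r/ρ)^{5/2} D(ρ) + (ρ/r)² K] for all 0 < r ≤ ρ ≤ R, where K ≥ 0 is a constant and c > 0. Then for any γ ∈ (0,1) there exists c₁ = c₁(γ, c, K) such that D(r) ≤ c₁((r/R)^{5γ/2} D(R) + 1) for all 0 < r ≤ R. -/

import Mathlib

set_option maxHeartbeats 1600000 in
/-- Abstract version of Proposition 2.5: the two-radius inequality with decay
exponent 5/2 and error `(ρ/r)² K` implies power decay with any exponent
`5γ/2 < 5/2`, plus a bounded constant. -/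
theorem stmt_9 (R c K : ℝ) (D : ℝ → ℝ) (hR : 0 < R) (hc : 0 < c) (hK : 0 ≤ K)
    (hD0 : ∀ r, 0 < r → r ≤ R → 0 ≤ D r)
    (hiter : ∀ r ρ : ℝ, 0 < r → r ≤ ρ → ρ ≤ R →
      D r ≤ c * ((r/ρ) ^ ((5:ℝ)/2) * D ρ + (ρ/r)^2 * K)) :
    ∀ γ : ℝ, 0 < γ → γ < 1 →
      ∃ c₁ : ℝ, 0 < c₁ ∧ ∀ r : ℝ, 0 < r → r ≤ R →
        D r ≤ c₁ * ((r/R) ^ (5*γ/2) * D R + 1) := by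
  intro γ hγ0 hγ1
  have hα0 : 0 < 5*γ/2 := by positivity
  obtain ⟨c', hc'1, hcc'⟩ : ∃ c' : ℝ, 1 ≤ c' ∧ c ≤ c' := ⟨max c 1, le_max_right _ _, le_max_left _ _⟩
  have hc'0 : 0 < c' := lt_of_lt_of_le one_pos hc'1
  -- choose θ
  obtain ⟨θ, hθ0, hθ1, hstep⟩ :
      ∃ θ : ℝ, 0 < θ ∧ θ < 1 ∧ c' * θ ^ ((5:ℝ)/2) ≤ θ ^ (5*γ/2) := by
    have h2c' : (1:ℝ) < 2*c' := by linarith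
    have hβ0 : (0:ℝ) < 5*(1-γ)/2 := by nlinarith
    have he0 : (0:ℝ) < 2/(5*(1-γ)) := by apply div_pos two_pos; nlinarith
    refine ⟨(2*c') ^ (-(2/(5*(1-γ)))), Real.rpow_pos_of_pos (by linarith) _,
      Real.rpow_lt_one_of_one_lt_of_neg h2c' (by linarith), ?_⟩
    set θ : ℝ := (2*c') ^ (-(2/(5*(1-γ)))) with hθdef
    have hθ0 : 0 < θ := Real.rpow_pos_of_pos (by linarith) _
    have hkey : θ ^ (5*(1-γ)/2) = (2*c')⁻¹ := by
      rw [hθdef, ← Real.rpow_mul (by linarith : (0:ℝ) ≤ 2*c')]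
      have h5 : 5*(1-γ) ≠ 0 := by nlinarith
      have h1 : -(2/(5*(1-γ))) * (5*(1-γ)/2) = -1 := by
        rw [neg_mul, div_mul_div_comm, mul_comm 2 (5*(1-γ)), div_self (mul_ne_zero h5 two_ne_zero)]
      rw [h1, Real.rpow_neg_one]
    have hsplit : θ ^ ((5:ℝ)/2) = θ ^ (5*γ/2) * θ ^ (5*(1-γ)/2) := by
      rw [← Real.rpow_add hθ0]; ring_nf
    have hθα : 0 < θ ^ (5*γ/2) := Real.rpow_pos_of_pos hθ0 _
    rw [hsplit, hkey]
    rw [mul_comm (θ ^ (5*γ/2)), ← mul_assoc]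
    have : c' * (2*c')⁻¹ = 2⁻¹ := by field_simp
    rw [this]
    nlinarith
  have hθle1 : θ ≤ 1 := le_of_lt hθ1
  have hθα1 : θ ^ (5*γ/2) < 1 := Real.rpow_lt_one (le_of_lt hθ0) hθ1 hα0
  have hθα0 : 0 < θ ^ (5*γ/2) := Real.rpow_pos_of_pos hθ0 _
  -- choose S with c'*(1/θ)^2*K = S*(1-θ^α)
  obtain ⟨S, hS0, hMS⟩ : ∃ S : ℝ, 0 ≤ S ∧ c' * (1/θ)^2 * K = S * (1 - θ ^ (5*γ/2)) := by
    refine ⟨c' * (1/θ)^2 * K / (1 - θ ^ (5*γ/2)), div_nonneg (by positivity) (by linarith), ?_⟩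
    rw [div_mul_cancel₀]
    exact ne_of_gt (by linarith)
  have hM0 : 0 ≤ c' * (1/θ)^2 * K := by positivity
  have hDR0 : 0 ≤ D R := hD0 R hR le_rfl
  have hθn_pos : ∀ n : ℕ, 0 < θ ^ n * R := fun n => mul_pos (pow_pos hθ0 n) hR
  have hθn_le : ∀ n : ℕ, θ ^ n * R ≤ R := fun n => by
    nlinarith [pow_le_one₀ (le_of_lt hθ0) hθle1 (n := n), pow_pos hθ0 n]
  have hDn0 : ∀ n : ℕ, 0 ≤ D (θ ^ n * R) := fun n => hD0 _ (hθn_pos n) (hθn_le n)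
  -- main induction
  have hmain : ∀ n : ℕ, D (θ ^ n * R) ≤ (θ ^ n) ^ (5*γ/2) * D R + S := by
    intro n
    induction n with
    | zero => simp [Real.one_rpow]; linarith
    | succ n ih =>
      have h1 := hiter (θ ^ (n+1) * R) (θ ^ n * R) (hθn_pos (n+1))
        (by
          have hp : θ ^ (n+1) ≤ θ ^ n := pow_le_pow_of_le_one (le_of_lt hθ0) hθle1 (Nat.le_succ n)
          nlinarith) (hθn_le n)
      have hpn : (0:ℝ) < θ ^ n := pow_pos hθ0 n
      have hr1 : θ ^ (n+1) * R / (θ ^ n * R) = θ := by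
        rw [pow_succ]; field_simp
      have hr2 : θ ^ n * R / (θ ^ (n+1) * R) = 1/θ := by
        rw [pow_succ]; field_simp
      rw [hr1, hr2] at h1
      have h2 : c * (θ ^ ((5:ℝ)/2) * D (θ ^ n * R) + (1/θ)^2 * K)
          ≤ c' * (θ ^ ((5:ℝ)/2) * D (θ ^ n * R) + (1/θ)^2 * K) := by
        apply mul_le_mul_of_nonneg_right hcc'
        have := hDn0 n
        positivity
      have h3 : c' * (θ ^ ((5:ℝ)/2) * D (θ ^ n * R) + (1/θ)^2 * K)
          = (c' * θ ^ ((5:ℝ)/2)) * D (θ ^ n * R) + c' * (1/θ)^2 * K := by ring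
      have h4 : (c' * θ ^ ((5:ℝ)/2)) * D (θ ^ n * R) ≤ θ ^ (5*γ/2) * D (θ ^ n * R) :=
        mul_le_mul_of_nonneg_right hstep (hDn0 n)
      have h5 : θ ^ (5*γ/2) * D (θ ^ n * R) ≤ θ ^ (5*γ/2) * ((θ ^ n) ^ (5*γ/2) * D R + S) :=
        mul_le_mul_of_nonneg_left ih (le_of_lt hθα0)
      have h6 : θ ^ (5*γ/2) * ((θ ^ n) ^ (5*γ/2) * D R + S) + c' * (1/θ)^2 * K
          = (θ ^ (n+1)) ^ (5*γ/2) * D R + (θ ^ (5*γ/2) * S + c' * (1/θ)^2 * K) := by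
        have hmul : θ ^ (5*γ/2) * (θ ^ n) ^ (5*γ/2) = (θ ^ (n+1) : ℝ) ^ (5*γ/2) := by
          rw [← Real.mul_rpow (le_of_lt hθ0) (le_of_lt hpn), ← pow_succ']
        rw [← hmul]; ring
      have h7 : θ ^ (5*γ/2) * S + c' * (1/θ)^2 * K ≤ S := by nlinarith [hMS]
      calc D (θ ^ (n+1) * R) ≤ c' * (θ ^ ((5:ℝ)/2) * D (θ ^ n * R) + (1/θ)^2 * K) :=
              le_trans h1 h2
        _ = (c' * θ ^ ((5:ℝ)/2)) * D (θ ^ n * R) + c' * (1/θ)^2 * K := h3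
        _ ≤ θ ^ (5*γ/2) * ((θ ^ n) ^ (5*γ/2) * D R + S) + c' * (1/θ)^2 * K := by linarith
        _ = (θ ^ (n+1)) ^ (5*γ/2) * D R + (θ ^ (5*γ/2) * S + c' * (1/θ)^2 * K) := h6
        _ ≤ (θ ^ (n+1)) ^ (5*γ/2) * D R + S := by linarith
  -- constant
  have hP0 : 0 < (1/θ) ^ (5*γ/2) := Real.rpow_pos_of_pos (by positivity) _
  have hy0 : (0:ℝ) ≤ c' * (S + (1/θ)^2 * K) := by positivity
  refine ⟨c' * (1/θ) ^ (5*γ/2) + c' * (S + (1/θ)^2 * K) + 1, by nlinarith, ?_⟩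
  intro r hr0 hrR
  have hex : ∃ n : ℕ, θ ^ n * R < r := by
    obtain ⟨n, hn⟩ := exists_pow_lt_of_lt_one (div_pos hr0 hR) hθ1
    exact ⟨n, by rwa [← lt_div_iff₀ hR]⟩
  obtain ⟨m, hm⟩ : ∃ m, Nat.find hex = m + 1 := by
    have hne : Nat.find hex ≠ 0 := by
      intro h0
      have h1 := Nat.find_spec hex
      rw [h0] at h1
      simp at h1; linarith
    exact Nat.exists_eq_succ_of_ne_zero hne
  have hupper : r ≤ θ ^ m * R := by
    have := Nat.find_min hex (by omega : m < Nat.find hex)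
    linarith [not_lt.mp this]
  have hlower : θ ^ (m+1) * R < r := by rw [← hm]; exact Nat.find_spec hex
  have hρ0 : 0 < θ ^ m * R := hθn_pos m
  have h1 := hiter r (θ ^ m * R) hr0 hupper (hθn_le m)
  have hq1 : (r/(θ ^ m * R)) ^ ((5:ℝ)/2) ≤ 1 :=
    Real.rpow_le_one (by positivity) (div_le_one_of_le₀ hupper (le_of_lt hρ0)) (by norm_num)
  have hq2 : ((θ ^ m * R)/r) ^ 2 ≤ (1/θ) ^ 2 := by
    apply pow_le_pow_left₀ (by positivity)
    rw [div_le_div_iff₀ hr0 hθ0]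
    have hmul : θ * (θ ^ m * R) = θ ^ (m+1) * R := by rw [pow_succ]; ring
    nlinarith
  have hDm := hmain m
  have hDm0 := hDn0 m
  have hA0 : 0 ≤ (r/R) ^ (5*γ/2) := Real.rpow_nonneg (by positivity) _
  have hq3 : (θ ^ m : ℝ) ^ (5*γ/2) ≤ (1/θ) ^ (5*γ/2) * (r/R) ^ (5*γ/2) := by
    have hbase : (θ ^ m : ℝ) ≤ (1/θ) * (r/R) := by
      rw [pow_succ] at hlower
      rw [div_mul_div_comm, le_div_iff₀ (by positivity : (0:ℝ) < θ * R)]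
      nlinarith
    calc (θ ^ m : ℝ) ^ (5*γ/2) ≤ ((1/θ) * (r/R)) ^ (5*γ/2) :=
          Real.rpow_le_rpow (by positivity) hbase (le_of_lt hα0)
      _ = (1/θ) ^ (5*γ/2) * (r/R) ^ (5*γ/2) := Real.mul_rpow (by positivity) (by positivity)
  have hrpow0 : (0:ℝ) ≤ (r/(θ ^ m * R)) ^ ((5:ℝ)/2) := Real.rpow_nonneg (by positivity) _
  have h2 : D r ≤ c' * (((θ ^ m : ℝ) ^ (5*γ/2) * D R + S) + (1/θ)^2 * K) := by
    have hKq : ((θ ^ m * R)/r)^2 * K ≤ (1/θ)^2 * K := mul_le_mul_of_nonneg_right hq2 hK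
    have hDq : (r/(θ ^ m * R)) ^ ((5:ℝ)/2) * D (θ ^ m * R) ≤ D (θ ^ m * R) := by
      nlinarith
    calc D r ≤ c * ((r/(θ ^ m * R)) ^ ((5:ℝ)/2) * D (θ ^ m * R) + ((θ ^ m * R)/r)^2 * K) := h1
      _ ≤ c' * ((r/(θ ^ m * R)) ^ ((5:ℝ)/2) * D (θ ^ m * R) + ((θ ^ m * R)/r)^2 * K) := by
          apply mul_le_mul_of_nonneg_right hcc'
          positivity
      _ ≤ c' * ((D (θ ^ m * R)) + (1/θ)^2 * K) := by nlinarith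
      _ ≤ c' * (((θ ^ m : ℝ) ^ (5*γ/2) * D R + S) + (1/θ)^2 * K) := by nlinarith
  have h3 : c' * (((θ ^ m : ℝ) ^ (5*γ/2) * D R + S) + (1/θ)^2 * K)
      ≤ c' * (1/θ) ^ (5*γ/2) * ((r/R) ^ (5*γ/2) * D R) + c' * (S + (1/θ)^2 * K) := by
    have hmm : (θ ^ m : ℝ) ^ (5*γ/2) * D R ≤ (1/θ) ^ (5*γ/2) * (r/R) ^ (5*γ/2) * D R :=
      mul_le_mul_of_nonneg_right hq3 hDR0
    nlinarith
  have hfinal : c' * (1/θ) ^ (5*γ/2) * ((r/R) ^ (5*γ/2) * D R) + c' * (S + (1/θ)^2 * K)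
      ≤ (c' * (1/θ) ^ (5*γ/2) + c' * (S + (1/θ)^2 * K) + 1) * ((r/R) ^ (5*γ/2) * D R + 1) := by
    have hx : 0 ≤ (r/R) ^ (5*γ/2) * D R := mul_nonneg hA0 hDR0
    have hy : 0 ≤ c' * (S + (1/θ)^2 * K) := by positivity
    nlinarith [mul_nonneg hy hx, mul_nonneg hx (le_of_lt hP0)]
  linarith
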